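/- arXiv:math/0612165 — 3 statements merged into one kernel-verified Lean document; each statement's English description precedes it below -/
import Mathlib

section
/- Every morphism in the category ΔΣ of noncommutative sets factors uniquely as a bijection (permutation) followed by an order-preserving map, once linear orderings of the source and target are fixed. -/
/-!
Order `S` lexicographically: first by the value of `f`, then by the fiber orderings `r`. This is
a linear order on `S`, and a permutation `σ` has the two required properties exactly when it is
an order isomorphism from this lexicographic order to the given order of `S`. Between two finite
linear orders of the same cardinality there is exactly one order isomorphism.
-/

def OrderedBy (α : Type*) (_le : α → α → Prop) : Type _ := α

noncomputable instance {α : Type*} (le : α → α → Prop) [IsLinearOrder α le] :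
    LinearOrder (OrderedBy α le) where
  le := le
  le_refl := refl_of le
  le_trans _ _ _ := trans_of le
  le_antisymm _ _ := antisymm_of le
  le_total := total_of le
  toDecidableLE := Classical.decRel le

instance {α : Type*} [Fintype α] (le : α → α → Prop) : Fintype (OrderedBy α le) := ‹Fintype α›

theorem Equiv.Perm.existsUnique_le_iff_of_isLinearOrder {α : Type*} [Fintype α] [LinearOrder α]
    (le : α → α → Prop) [IsLinearOrder α le] :
    ∃! σ : Equiv.Perm α, ∀ a b, le a b ↔ σ a ≤ σ b := by
  let e : OrderedBy α le ≃o α :=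
    (Fintype.orderIsoFinOfCardEq _ rfl).symm.trans (Fintype.orderIsoFinOfCardEq α rfl)
  refine ⟨e.toEquiv, fun a b => e.le_iff_le.symm, fun σ hσ => ?_⟩
  let e' : OrderedBy α le ≃o α := ⟨σ, fun {a b} => (hσ a b).symm⟩
  exact congrArg RelIso.toEquiv (Subsingleton.elim e' e)

section FiberLex

variable {S T : Type*} [LinearOrder T]

def fiberLex (f : S → T) (r : S → S → Prop) (a b : S) : Prop :=
  f a < f b ∨ f a = f b ∧ r a b

theorem isLinearOrder_fiberLex (f : S → T) (r : S → S → Prop)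
    (hrefl : ∀ s, r s s)
    (htotal : ∀ s₁ s₂, f s₁ = f s₂ → r s₁ s₂ ∨ r s₂ s₁)
    (hantisymm : ∀ s₁ s₂, f s₁ = f s₂ → r s₁ s₂ → r s₂ s₁ → s₁ = s₂)
    (htrans : ∀ s₁ s₂ s₃, f s₁ = f s₂ → f s₂ = f s₃ → r s₁ s₂ → r s₂ s₃ → r s₁ s₃) :
    IsLinearOrder S (fiberLex f r) where
  refl a := .inr ⟨rfl, hrefl a⟩
  trans a b c
    | .inl hab, .inl hbc => .inl (hab.trans hbc)
    | .inl hab, .inr hbc => .inl (hbc.1 ▸ hab)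
    | .inr hab, .inl hbc => .inl (hab.1 ▸ hbc)
    | .inr hab, .inr hbc => .inr ⟨hab.1.trans hbc.1, htrans a b c hab.1 hbc.1 hab.2 hbc.2⟩
  antisymm a b
    | .inl hab, .inl hba => absurd hab hba.not_gt
    | .inl hab, .inr hba => absurd hab hba.1.not_gt
    | .inr hab, .inl hba => absurd hba hab.1.not_gt
    | .inr hab, .inr hba => hantisymm a b hab.1 hab.2 hba.2
  total a b := by
    rcases lt_trichotomy (f a) (f b) with h | h | h
    · exact .inl (.inl h)
    · exact (htotal a b h).imp (.inr ⟨h, ·⟩) (.inr ⟨h.symm, ·⟩)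
    · exact .inr (.inl h)

theorem monotone_comp_symm_and_fiber_le_iff {β : Type*} [LinearOrder β] (f : S → T)
    (r : S → S → Prop) (e : S ≃ β) :
    (Monotone (f ∘ e.symm) ∧ ∀ s₁ s₂, f s₁ = f s₂ → (r s₁ s₂ ↔ e s₁ ≤ e s₂)) ↔
      ∀ a b, fiberLex f r a b ↔ e a ≤ e b := by
  constructor
  · rintro ⟨hmono, hfiber⟩ a b
    have hf {a b : S} (hle : e a ≤ e b) : f a ≤ f b := by simpa using hmono hle
    constructor
    · rintro (hlt | ⟨heq, hr⟩)
      · exact le_of_not_gt fun hba => (hf hba.le).not_gt hlt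
      · exact (hfiber a b heq).1 hr
    · intro hle
      rcases (hf hle).lt_or_eq with hlt | heq
      · exact .inl hlt
      · exact .inr ⟨heq, (hfiber a b heq).2 hle⟩
  · intro h
    refine ⟨fun x y hxy => ?_, fun a b heq => ?_⟩
    · rcases (h (e.symm x) (e.symm y)).2 (by simpa using hxy) with hlt | ⟨heq, -⟩
      exacts [hlt.le, heq.le]
    · simp [← h, fiberLex, heq]

end FiberLex

theorem ncset_unique_factorization {S T : Type*} [Fintype S] [LinearOrder S] [LinearOrder T]
    (f : S → T) (r : S → S → Prop)
    (hrefl : ∀ s, r s s)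
    (htotal : ∀ s₁ s₂, f s₁ = f s₂ → r s₁ s₂ ∨ r s₂ s₁)
    (hantisymm : ∀ s₁ s₂, f s₁ = f s₂ → r s₁ s₂ → r s₂ s₁ → s₁ = s₂)
    (htrans : ∀ s₁ s₂ s₃, f s₁ = f s₂ → f s₂ = f s₃ → r s₁ s₂ → r s₂ s₃ → r s₁ s₃) :
    ∃! σ : Equiv.Perm S,
      Monotone (f ∘ σ.symm) ∧
      ∀ s₁ s₂, f s₁ = f s₂ → (r s₁ s₂ ↔ σ s₁ ≤ σ s₂) := by
  have := isLinearOrder_fiberLex f r hrefl htotal hantisymm htrans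
  simpa only [monotone_comp_symm_and_fiber_le_iff] using
    Equiv.Perm.existsUnique_le_iff_of_isLinearOrder (fiberLex f r)
end

section
/- Let P be a (non-symmetric) operad in a closed symmetric monoidal category C and let A be a subcategory of ΔΣ. Then the assignment with the same objects as A and Hom_{A_P}(S,T) = ∐_{f ∈ Hom_A(S,T)} ⊗_{t∈T} P(f^{-1}(t)), with composition induced by the operad structure maps of P, satisfies associativity and unitality, hence defines a C-enriched category. -/
/-!
STATEMENT 8: Let `P` be a (non-symmetric) operad in a closed symmetric monoidal category `C`
(here `C = Type u`, with `⊗ = ×`, which is closed symmetric monoidal, coproducts given by sigma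
types, and `⊗` distributing over coproducts) and let `A` be a subcategory of `ΔΣ`.  Then the
assignment with the same objects as `A` and
`Hom_{A_P}(S, T) = ∐_{f ∈ Hom_A(S,T)} ⊗_{t ∈ T} P(f⁻¹(t))`,
with the composition induced by the operad structure maps of `P`, satisfies associativity and
unitality, hence defines a `C`-enriched category.

Morphisms of `ΔΣ` are encoded by their fibers with linear orderings (`NCHom`); the operad `P`
consists of a sequence `ob`, a unit, and substitution maps `γ`, and the operad axioms (left and
right unitality and associativity of `γ`) are the hypotheses `P.LeftUnit`, `P.RightUnit`,
`P.Assoc`.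
-/
/-- A morphism in the (skeletal) category `ΔΣ` of noncommutative sets, from the `m`-element set
`Fin m` to the `n`-element set `Fin n`: a map of sets together with a linear ordering of each
fiber, recorded as the list `fiber j` of the elements of the fiber over `j`, in their linear
order.  The conditions say that the fibers partition `Fin m`. -/
structure NCHom (m n : ℕ) : Type where
  fiber : Fin n → List (Fin m)
  nodup : ∀ j, (fiber j).Nodup
  mem_unique : ∀ i : Fin m, ∃! j : Fin n, i ∈ fiber j

namespace NCHom

/-- The identity morphism of `ΔΣ`. -/
def id (m : ℕ) : NCHom m m where
  fiber j := [j]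
  nodup j := List.nodup_singleton j
  mem_unique i :=
    ⟨i, List.mem_singleton.mpr rfl, fun j hj => (List.mem_singleton.mp hj).symm⟩

/-- Composition in `ΔΣ`: the fiber of `g ∘ f` over `k` is the union of the fibers of `f` over
the elements of the fiber of `g` over `k`, ordered lexicographically. -/
def comp {m n p : ℕ} (g : NCHom n p) (f : NCHom m n) : NCHom m p where
  fiber k := (g.fiber k).flatMap f.fiber
  nodup k := by
    rw [List.nodup_flatMap]
    refine ⟨fun j _ => f.nodup j, ?_⟩
    refine List.Pairwise.imp_of_mem ?_ ((g.nodup k).imp (fun hne => hne) )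
    intro j₁ j₂ _ _ hne
    rw [Function.onFun, List.disjoint_left]
    intro i h1 h2
    obtain ⟨j, _, hj⟩ := f.mem_unique i
    exact hne ((hj j₁ h1).trans (hj j₂ h2).symm)
  mem_unique i := by
    obtain ⟨j, hij, hj⟩ := f.mem_unique i
    obtain ⟨k, hjk, hk⟩ := g.mem_unique j
    refine ⟨k, List.mem_flatMap.mpr ⟨j, hjk, hij⟩, ?_⟩
    intro k' hk'
    obtain ⟨j', hj'k', hij'⟩ := List.mem_flatMap.mp hk'
    exact hk k' (by rwa [hj j' hij'] at hj'k')

end NCHom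
universe u

/-- The underlying data of a (non-symmetric) operad in `Type u`: a sequence of objects `ob n`
(the `n`-ary operations), a unit, and structure maps `γ` substituting a family of operations
(of arities given by the list `ns`) into an operation of arity `ns.length`. -/
structure Operad : Type (u + 1) where
  ob : ℕ → Type u
  unit : ob 1
  γ : ∀ (ns : List ℕ), ob ns.length → ((i : Fin ns.length) → ob ns[i]) → ob ns.sum

namespace Operad

variable (P : Operad.{u})

/-- Transport an operation along an equality of arities. -/
def castOb {a b : ℕ} (h : a = b) : P.ob a → P.ob b := fun x => h ▸ x

theorem sum_take_add_lt {ns : List ℕ} (i : Fin ns.length) {j : ℕ} (hj : j < ns[(i : ℕ)]) :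
    (ns.take i).sum + j < ns.sum := by
  conv_rhs => rw [← List.sum_take_add_sum_drop ns i]
  have hd : ns[(i : ℕ)] :: ns.drop (i + 1) = ns.drop i := List.getElem_cons_drop i.isLt
  have : ns[(i : ℕ)] ≤ (ns.drop i).sum := by
    rw [← hd, List.sum_cons]; omega
  omega

/-- The position in the concatenation `nss.flatten` of the `j`-th element of the `i`-th list. -/
def flatIdx (nss : List (List ℕ)) (i : Fin nss.length) (j : Fin nss[i].length) :
    Fin nss.flatten.length :=
  ⟨((nss.take i).map List.length).sum + j, by
    rw [List.length_flatten, List.map_take]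
    exact sum_take_add_lt (ns := nss.map List.length) (Fin.cast (by simp) i)
      (by simpa using j.isLt)⟩

/-- Left unit axiom: substituting into the identity operation gives the operation back. -/
def LeftUnit : Prop :=
  ∀ (n : ℕ) (b : (i : Fin ([n] : List ℕ).length) → P.ob ([n] : List ℕ)[i]),
    P.γ [n] P.unit b = P.castOb (by simp) (b ⟨0, by simp⟩)

/-- Right unit axiom: substituting identities into an operation gives it back. -/
def RightUnit : Prop :=
  ∀ (n : ℕ) (a : P.ob n),
    P.γ (List.replicate n 1)
        (P.castOb (by simp) a)
        (fun i => P.castOb (by simp) P.unit)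
      = P.castOb (by simp) a

/-- Associativity axiom for `γ`, in two-level form: substituting the `c`-operations into
`γ nss.map length a b` agrees with substituting into `a` the results of substituting the
`c`-operations into the `b`-operations.  Here `c` is indexed by positions of the flattened list
and `d` is the same family indexed in two-level form. -/
def Assoc : Prop :=
  ∀ (nss : List (List ℕ)) (a : P.ob nss.length)
    (b : (i : Fin nss.length) → P.ob nss[i].length)
    (c : (t : Fin nss.flatten.length) → P.ob nss.flatten[t])
    (d : (i : Fin nss.length) → (j : Fin nss[i].length) → P.ob nss[i][j]),
    (∀ (i : Fin nss.length) (j : Fin nss[i].length), HEq (c (flatIdx nss i j)) (d i j)) →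
    P.γ nss.flatten
        (P.castOb (by simp)
          (P.γ (nss.map List.length)
            (P.castOb (by simp) a)
            (fun i => P.castOb (by simp) (b (Fin.cast (by simp) i)))))
        c
      = P.castOb (by simp)
        (P.γ (nss.map List.sum)
          (P.castOb (by simp) a)
          (fun i => P.castOb (List.getElem_map _).symm
            (P.γ nss[(Fin.cast (List.length_map _) i : Fin nss.length)]
              (b (Fin.cast (List.length_map _) i))
              (d (Fin.cast (List.length_map _) i)))))

end Operad

open Operad in
/-- The Hom object `Hom_{A_P}(Fin m, Fin n) = ∐_{f} ⊗_{t} P(f⁻¹(t))` of the enriched category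
`A_P` (in `C = Type u`, the coproduct is a sigma type and the tensor product over the fibers is
a dependent product). -/
def HomP (P : Operad.{u}) (m n : ℕ) :=
  Σ f : NCHom m n, (j : Fin n) → P.ob (f.fiber j).length

/-- The identity of `A_P`: the identity of `ΔΣ` with the operadic unit on each fiber. -/
def idP (P : Operad.{u}) (m : ℕ) : HomP P m m :=
  ⟨NCHom.id m, fun _ => P.unit⟩

/-- The enriched composition of `A_P`, induced by the operad structure maps of `P`. -/
def compP {P : Operad.{u}} {m n p : ℕ} (g : HomP P n p) (f : HomP P m n) : HomP P m p :=
  ⟨g.1.comp f.1, fun k =>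
    P.castOb (by simp only [NCHom.comp, List.length_flatMap, Function.comp_def])
      (P.γ ((g.1.fiber k).map fun j => (f.1.fiber j).length)
        (P.castOb (List.length_map _).symm (g.2 k))
        (fun i => P.castOb (by simp)
          (f.2 ((g.1.fiber k).get (Fin.cast (List.length_map _) i)))))⟩

/-- A subcategory of `ΔΣ`: a collection of objects and morphisms closed under identities and
composition. -/
structure SubNC where
  objs : Set ℕ
  homs : ∀ m n : ℕ, Set (NCHom m n)
  id_mem : ∀ m ∈ objs, NCHom.id m ∈ homs m m
  comp_mem : ∀ {m n p : ℕ} (g : NCHom n p) (f : NCHom m n),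
    g ∈ homs n p → f ∈ homs m n → g.comp f ∈ homs m p

/-!
Every Hom component of a composite `compP g f` is, up to transport of arities, a single
substitution `Operad.subst` of the components of `f` into the component of `g`, indexed by the
entries of a fiber of `g`.  The unit laws of `A_P` are then the unit axioms of `P`, since the
fibers of the identity are singletons carrying the unit, and associativity is the associativity
axiom of `P` applied to the two-level list of arities of the fibers of `f` over the fibers of `g`
over a fiber of `h`.  The only combinatorial input is that `flatIdx` locates the `j`-th entry of
the `i`-th list in any flattened list of the same shape.
-/

namespace NCHom

theorem ext {m n : ℕ} {f g : NCHom m n} (h : f.fiber = g.fiber) : f = g := by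
  cases f; cases g; cases h; rfl

theorem comp_id {m n : ℕ} (f : NCHom m n) : f.comp (NCHom.id m) = f :=
  ext (funext fun k => by simp [comp, NCHom.id])

theorem id_comp {m n : ℕ} (f : NCHom m n) : (NCHom.id n).comp f = f :=
  ext (funext fun k => by simp [comp, NCHom.id])

theorem comp_assoc {m n p q : ℕ} (h : NCHom p q) (g : NCHom n p) (f : NCHom m n) :
    (h.comp g).comp f = h.comp (g.comp f) :=
  ext (funext fun l => by simp [comp, List.flatMap_assoc])

end NCHom

theorem List.getElem_flatten_sum_take_add {α : Type*} {L : List (List α)} {i j : ℕ}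
    (hi : i < L.length) (hj : j < L[i].length)
    (h : ((L.take i).map List.length).sum + j < L.flatten.length) :
    L.flatten[((L.take i).map List.length).sum + j] = L[i][j] := by
  have hdrop := List.drop_sum_flatten L i
  rw [← List.map_take] at hdrop
  rw [List.getElem_drop']
  simp only [hdrop, List.drop_eq_getElem_cons hi, List.flatten_cons]
  exact List.getElem_append_left hj

namespace Operad

theorem getElem_flatten_flatIdx {β : Type*} {nss : List (List ℕ)} {K : List (List β)}
    (hshape : nss.map List.length = K.map List.length) (i : Fin nss.length)
    (j : Fin nss[i].length) (hi : (i : ℕ) < K.length) (hj : (j : ℕ) < K[(i : ℕ)].length)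
    (h : (flatIdx nss i j : ℕ) < K.flatten.length) :
    K.flatten[(flatIdx nss i j : ℕ)] = K[(i : ℕ)][(j : ℕ)] := by
  have htake : (nss.take i).map List.length = (K.take i).map List.length := by
    rw [List.map_take, hshape, ← List.map_take]
  simp only [flatIdx, htake]
  exact List.getElem_flatten_sum_take_add hi hj _

variable (P : Operad.{u})

theorem castOb_heq {a b : ℕ} (h : a = b) (x : P.ob a) : HEq (P.castOb h x) x := by
  subst h; rfl

@[simp]
theorem castOb_heq_iff {a b : ℕ} (h : a = b) (x : P.ob a) {Z : Type u} (z : Z) :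
    HEq (P.castOb h x) z ↔ HEq x z := by
  subst h; rfl

@[simp]
theorem heq_castOb_iff {a b : ℕ} (h : a = b) (x : P.ob a) {Z : Type u} (z : Z) :
    HEq z (P.castOb h x) ↔ HEq z x := by
  subst h; rfl

theorem γ_congr {ns ns' : List ℕ} (h : ns = ns')
    {a : P.ob ns.length} {a' : P.ob ns'.length} (ha : HEq a a')
    {b : (i : Fin ns.length) → P.ob ns[i]} {b' : (i : Fin ns'.length) → P.ob ns'[i]}
    (hb : ∀ (i : Fin ns.length) (i' : Fin ns'.length), (i : ℕ) = i' → HEq (b i) (b' i')) :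
    HEq (P.γ ns a b) (P.γ ns' a' b') := by
  subst h
  cases eq_of_heq ha
  cases funext fun i => eq_of_heq (hb i i rfl)
  rfl

/-- `γ` with the inputs indexed by the entries of a list `L` rather than by positions. -/
def subst {α : Type*} (L : List α) (N : α → ℕ) (a : P.ob L.length) (b : ∀ x, P.ob (N x)) :
    P.ob (L.map N).sum :=
  P.γ (L.map N) (P.castOb (List.length_map _).symm a)
    (fun i => P.castOb (by simp) (b (L.get (Fin.cast (List.length_map _) i))))

theorem subst_congr {α : Type*} (L : List α) {N N' : α → ℕ} (hN : ∀ x, N x = N' x)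
    (a : P.ob L.length) {b : ∀ x, P.ob (N x)} {b' : ∀ x, P.ob (N' x)}
    (hb : ∀ x, HEq (b x) (b' x)) :
    HEq (P.subst L N a b) (P.subst L N' a b') := by
  cases funext hN
  cases funext fun x => eq_of_heq (hb x)
  rfl

theorem unit_subst (hlu : P.LeftUnit) {α : Type*} (x : α) (N : α → ℕ)
    (b : ∀ x, P.ob (N x)) :
    HEq (P.subst [x] N P.unit b) (b x) := by
  refine (P.γ_congr rfl ?_ ?_).trans
    ((heq_of_eq (hlu (N x) fun _ => P.castOb (by simp) (b x))).trans (P.castOb_heq _ _))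
  · exact P.castOb_heq _ _
  · intro i i' _
    simpa using congr_arg_heq b (List.getElem_singleton _)

theorem subst_unit (hru : P.RightUnit) {α : Type*} (L : List α) (a : P.ob L.length) :
    HEq (P.subst L (fun _ => 1) a (fun _ => P.unit)) a := by
  refine (P.γ_congr List.map_const' ?_ ?_).trans
    ((heq_of_eq (hru L.length a)).trans (P.castOb_heq _ _))
  · simp
  · intro i i' _
    simp

theorem subst_subst (hassoc : P.Assoc) {α β : Type*} (L : List α) (M : α → List β)
    (N : β → ℕ) (a : P.ob L.length) (b : ∀ x, P.ob (M x).length) (c : ∀ y, P.ob (N y))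
    {a' : P.ob (L.flatMap M).length} (ha' : HEq a' (P.subst L (fun x => (M x).length) a b)) :
    HEq (P.subst (L.flatMap M) N a' c)
      (P.subst L (fun x => ((M x).map N).sum) a (fun x => P.subst (M x) N (b x) c)) := by
  let nss := L.map fun x => (M x).map N
  let ι : Fin nss.length → Fin L.length := Fin.cast (List.length_map _)
  have hflatten : nss.flatten = (L.flatMap M).map N := by
    simp [nss, List.flatMap_def, Function.comp_def]
  have hflatLen : nss.flatten.length = (L.flatMap M).length := by rw [hflatten, List.length_map]
  have hlen : ∀ i, nss[i].length = (M (L.get (ι i))).length := by simp [nss, ι]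
  have hflat : ∀ i j, (L.flatMap M).get ((flatIdx nss i j).cast hflatLen) =
      (M (L.get (ι i))).get (j.cast (hlen i)) := by
    intro i j
    simp only [List.get_eq_getElem, Fin.val_cast, List.flatMap_def]
    rw [getElem_flatten_flatIdx (K := L.map M) (by simp [nss, Function.comp_def]) i j
      (by simpa [nss] using i.isLt) (by simpa [nss] using j.isLt)]
    simp [ι]
  have key := hassoc nss (P.castOb (List.length_map _).symm a)
    (fun i => P.castOb (hlen i).symm (b (L.get (ι i))))
    (fun t => P.castOb (by simp [hflatten]) (c ((L.flatMap M).get (t.cast hflatLen))))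
    (fun i j => P.castOb (by simp [nss, ι]) (c ((M (L.get (ι i))).get (j.cast (hlen i)))))
    (fun i j => by simpa using congr_arg_heq c (hflat i j))
  -- `key` is the associativity axiom for `nss`; it remains to match its two sides with ours.
  refine (P.γ_congr ?_ ?_ ?_).trans
    ((heq_of_eq key).trans ((P.castOb_heq _ _).trans (P.γ_congr ?_ ?_ ?_)))
  · simp [hflatten]
  · simp only [castOb_heq_iff, heq_castOb_iff]
    refine ha'.trans (P.γ_congr (by simp [nss, Function.comp_def]) (by simp) fun i i' hi => ?_)
    simp only [castOb_heq_iff, heq_castOb_iff]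
    exact congr_arg_heq b (by simp [hi, ι])
  · intro t t' ht
    simp only [castOb_heq_iff, heq_castOb_iff]
    exact congr_arg_heq c (by simp [ht])
  · simp [nss]
  · simp
  · intro i i' hi
    simp only [castOb_heq_iff, heq_castOb_iff]
    refine P.γ_congr (by simp [nss, hi]) ?_ fun j j' hj => ?_
    · simp only [castOb_heq_iff, heq_castOb_iff]
      exact congr_arg_heq b (by simp [hi, ι])
    · simp only [castOb_heq_iff, heq_castOb_iff]
      exact congr_arg_heq c (by simp [hi, hj, ι])

end Operad

theorem HomP.ext {P : Operad.{u}} {m n : ℕ} {f g : HomP P m n} (h₁ : f.1 = g.1)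
    (h₂ : ∀ k, HEq (f.2 k) (g.2 k)) : f = g := by
  obtain ⟨f₁, f₂⟩ := f
  obtain ⟨g₁, g₂⟩ := g
  cases h₁
  cases funext fun k => eq_of_heq (h₂ k)
  rfl

section compP

variable {P : Operad.{u}} {m n p q : ℕ}

theorem compP_snd_heq (g : HomP P n p) (f : HomP P m n) (k : Fin p) :
    HEq ((compP g f).2 k) (P.subst (g.1.fiber k) (fun j => (f.1.fiber j).length) (g.2 k) f.2) :=
  P.castOb_heq _ _

theorem compP_idP (hru : P.RightUnit) (f : HomP P m n) : compP f (idP P m) = f :=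
  HomP.ext (NCHom.comp_id f.1) fun k =>
    (compP_snd_heq f (idP P m) k).trans (P.subst_unit hru _ (f.2 k))

theorem idP_compP (hlu : P.LeftUnit) (f : HomP P m n) : compP (idP P n) f = f :=
  HomP.ext (NCHom.id_comp f.1) fun k =>
    (compP_snd_heq (idP P n) f k).trans (P.unit_subst hlu k _ f.2)

theorem compP_assoc (hassoc : P.Assoc) (f : HomP P m n) (g : HomP P n p) (h : HomP P p q) :
    compP (compP h g) f = compP h (compP g f) := by
  refine HomP.ext (NCHom.comp_assoc h.1 g.1 f.1) fun l => ?_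
  let F := fun k : Fin p =>
    P.subst (g.1.fiber k) (fun j => (f.1.fiber j).length) (g.2 k) f.2
  have hleft : HEq ((compP (compP h g) f).2 l) (P.subst (h.1.fiber l) _ (h.2 l) F) :=
    (compP_snd_heq _ _ l).trans (P.subst_subst hassoc _ _ _ _ _ _ (compP_snd_heq h g l))
  have hright : HEq ((compP h (compP g f)).2 l) (P.subst (h.1.fiber l) _ (h.2 l) F) :=
    (compP_snd_heq _ _ l).trans
      (P.subst_congr _ (fun k => List.length_flatMap) _ fun k => compP_snd_heq g f k)
  exact hleft.trans hright.symm

end compP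

/-- The enriched composition of `A_P` is unital and associative, i.e. `A_P` is a category
enriched in `C = Type u`. -/
theorem enriched_composition_unital_assoc (P : Operad.{u})
    (hlu : P.LeftUnit) (hru : P.RightUnit) (hassoc : P.Assoc) (A : SubNC) :
    (∀ m n : ℕ, m ∈ A.objs → n ∈ A.objs → ∀ f : HomP P m n, f.1 ∈ A.homs m n →
      compP f (idP P m) = f ∧ compP (idP P n) f = f) ∧
    (∀ m n p q : ℕ, ∀ (f : HomP P m n) (g : HomP P n p) (h : HomP P p q),
      f.1 ∈ A.homs m n → g.1 ∈ A.homs n p → h.1 ∈ A.homs p q →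
      compP (compP h g) f = compP h (compP g f)) :=
  ⟨fun _ _ _ _ f _ => ⟨compP_idP hru f, idP_compP hlu f⟩,
    fun _ _ _ _ f g h _ _ _ => compP_assoc hassoc f g h⟩
end

section
/- A morphism f : S → T in the category ^0ΔC of based cyclically ordered sets, together with the linear ordering of each fiber, extends canonically to a morphism S ⊔ {1} → T ⊔ {1} of doubly based totally ordered sets, by sending the elements of f^{-1}(0) greater than the basepoint 0 (in the fiber's linear order, relative to the cyclic structure) to 0 and those less than 0 to 1; this construction is functorial and gives an isomorphism of categories ^0ΔC ≅ ^{01}Δ. -/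
/-!
STATEMENT 10: A morphism `f : S → T` in the category `^0ΔC` of based cyclically ordered sets,
together with the linear orderings of the fibers, extends canonically to a morphism
`S ⊔ {1} → T ⊔ {1}` of doubly based totally ordered sets (send the elements of `f⁻¹(0)` greater
than the basepoint `0` to `0` and those less than `0` to `1`); this construction is functorial
and gives an isomorphism of categories `^0ΔC ≅ ^{01}Δ`.

We use skeletal models.  `^{01}Δ` has objects `m : ℕ` (standing for `Fin (m+2)`) and morphisms
the monotone doubly based maps.  `^0ΔC` has objects `m : ℕ` (standing for the based cyclically
ordered set `ℤ/(m+1)` with basepoint `0`); a basepoint-preserving cyclic map with fiber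
orderings is encoded, in the standard way, as a monotone map `F : ℤ → ℤ` with `F 0 = 0` and
`F (x + (m+1)) = F x + (n+1)` (the fiber orderings being recorded by the integral lifts).
-/

open CategoryTheory

/-- Objects of the doubly based simplex category `^{01}Δ`: `m` stands for `Fin (m+2)`. -/
def TwoPtDelta : Type := ℕ

/-- Morphisms of `^{01}Δ`: monotone maps preserving the minimal and the maximal element. -/
def TwoPtDelta.Hom (m n : ℕ) : Type :=
  {f : Fin (m + 2) →o Fin (n + 2) //
    f 0 = 0 ∧ f (Fin.last (m + 1)) = Fin.last (n + 1)}

instance : Category TwoPtDelta where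
  Hom := TwoPtDelta.Hom
  id m := ⟨OrderHom.id, rfl, rfl⟩
  comp {m n p} f g := ⟨g.1.comp f.1,
    by show g.1 (f.1 0) = 0; rw [f.2.1]; exact g.2.1,
    by show g.1 (f.1 _) = _; rw [f.2.2]; exact g.2.2⟩

/-- Objects of the based cyclic category `^0ΔC`: `m` stands for the based cyclically ordered
set `ℤ/(m+1)` with basepoint `0`. -/
def BasedCyclic : Type := ℕ

/-- Morphisms of `^0ΔC`: basepoint-preserving cyclic-order-preserving maps with linearly
ordered fibers, encoded as monotone degree-one maps of `ℤ` fixing `0`. -/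
def BasedCyclic.Hom (m n : ℕ) : Type :=
  {F : ℤ →o ℤ // F 0 = 0 ∧ ∀ x : ℤ, F (x + (m + 1)) = F x + (n + 1)}

noncomputable instance : Category BasedCyclic where
  Hom := BasedCyclic.Hom
  id m := ⟨OrderHom.id, rfl, fun x => rfl⟩
  comp {m n p} F G := ⟨G.1.comp F.1,
    by show G.1 (F.1 0) = 0; rw [F.2.1]; exact G.2.1,
    by intro x; show G.1 (F.1 (x + _)) = G.1 (F.1 x) + _; rw [F.2.2]; exact G.2.2 _⟩


/-!
A morphism `F` of `^0ΔC` is determined by its values on `{0, …, m+1}`: since `F 0 = 0` and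
`F (m+1) = n+1`, these form a doubly based monotone map `Fin (m+2) → Fin (n+2)`, and
`F (i + q(m+1)) = F i + q(n+1)` recovers the rest. Conversely every doubly based monotone `f`
extends by that formula; the two prescriptions for `m+1 + q(m+1) = 0 + (q+1)(m+1)` agree
precisely because `f (m+1) = n+1 = f 0 + (n+1)`, and this is what makes the extension monotone.
Restriction is functorial because `F` maps `{0, …, m+1}` into `{0, …, n+1}`.
-/

namespace BasedCyclic.Hom

variable {m n : ℕ}

@[ext]
lemma ext {F G : BasedCyclic.Hom m n} (h : ∀ x, F.1 x = G.1 x) : F = G :=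
  Subtype.ext (OrderHom.ext _ _ (funext h))

lemma map_add_mul (F : BasedCyclic.Hom m n) (x q : ℤ) :
    F.1 (x + q * (m + 1)) = F.1 x + q * (n + 1) := by
  induction q using Int.induction_on with
  | zero => simp
  | succ k ih => rw [add_one_mul, ← add_assoc, F.2.2, ih, add_one_mul, add_assoc]
  | pred k ih =>
    have h := F.2.2 (x + (-(k : ℤ) - 1) * (m + 1))
    rw [add_assoc, ← add_one_mul, sub_add_cancel, ih] at h
    linear_combination -h

lemma map_modulus (F : BasedCyclic.Hom m n) : F.1 ((m : ℤ) + 1) = n + 1 := by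
  simpa [F.2.1] using F.2.2 0

lemma map_mem_Icc (F : BasedCyclic.Hom m n) {x : ℤ} (hx : x ∈ Set.Icc 0 ((m : ℤ) + 1)) :
    F.1 x ∈ Set.Icc 0 ((n : ℤ) + 1) := by
  simpa only [F.2.1, F.map_modulus] using F.1.monotone.mapsTo_Icc hx

/-- The restriction of `F` to `{0, …, m+1}`. -/
noncomputable def toTwoPtDelta (F : BasedCyclic.Hom m n) : TwoPtDelta.Hom m n :=
  ⟨⟨fun i => ⟨(F.1 i).toNat, by
      have := (F.map_mem_Icc ⟨Int.natCast_nonneg i, by omega⟩).2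
      omega⟩,
    fun _ _ hij => Int.toNat_le_toNat (F.1.monotone (by exact_mod_cast hij))⟩,
    Fin.ext (by change (F.1 ((0 : Fin (m + 2)) : ℕ)).toNat = 0; simp [F.2.1]),
    Fin.ext (by change (F.1 ((Fin.last (m + 1) : ℕ) : ℤ)).toNat = n + 1; simp [F.map_modulus])⟩

@[simp]
lemma coe_toTwoPtDelta_apply (F : BasedCyclic.Hom m n) (i : Fin (m + 2)) :
    ((F.toTwoPtDelta.1 i : ℕ) : ℤ) = F.1 i :=
  Int.toNat_of_nonneg (F.map_mem_Icc ⟨Int.natCast_nonneg i, by omega⟩).1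

end BasedCyclic.Hom

def Int.residue (m : ℕ) (x : ℤ) : Fin (m + 1) :=
  ⟨(x % (m + 1)).toNat, by
    have := Int.emod_lt_of_pos x (show (0 : ℤ) < m + 1 by positivity)
    omega⟩

lemma Int.residue_add_mul (m : ℕ) (j : Fin (m + 1)) (q : ℤ) :
    Int.residue m (j + q * (m + 1)) = j := by
  have hj : ((j : ℕ) : ℤ) < m + 1 := by omega
  ext
  simp [Int.residue, Int.add_mul_emod_self_right, Int.emod_eq_of_lt (Int.natCast_nonneg j) hj]

lemma Int.exists_eq_fin_add_mul (m : ℕ) (x : ℤ) :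
    ∃ (j : Fin (m + 1)) (q : ℤ), x = j + q * (m + 1) := by
  refine ⟨Int.residue m x, x / (m + 1), ?_⟩
  have := Int.emod_nonneg x (show (m : ℤ) + 1 ≠ 0 by positivity)
  simp only [Int.residue, Int.toNat_of_nonneg this, Int.emod_add_ediv_mul]

namespace TwoPtDelta.Hom

variable {m n : ℕ}

@[ext]
lemma ext {f g : TwoPtDelta.Hom m n} (h : ∀ i, ((f.1 i : ℕ) : ℤ) = g.1 i) : f = g :=
  Subtype.ext (OrderHom.ext _ _ (funext fun i => Fin.ext (by exact_mod_cast h i)))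

/-- The periodic extension `i + q(m+1) ↦ f i + q(n+1)` of `f` to all of `ℤ`. -/
def extend (f : TwoPtDelta.Hom m n) (x : ℤ) : ℤ :=
  f.1 (Int.residue m x).castSucc + x / (m + 1) * (n + 1)

lemma extend_castSucc_add_mul (f : TwoPtDelta.Hom m n) (j : Fin (m + 1)) (q : ℤ) :
    f.extend (j + q * (m + 1)) = f.1 j.castSucc + q * (n + 1) := by
  have hj : ((j : ℕ) : ℤ) < m + 1 := by omega
  rw [extend, Int.residue_add_mul, Int.add_mul_ediv_right _ _ (by positivity),
    Int.ediv_eq_zero_of_lt (Int.natCast_nonneg j) hj, zero_add]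

lemma extend_add_mul (f : TwoPtDelta.Hom m n) (i : Fin (m + 2)) (q : ℤ) :
    f.extend (i + q * (m + 1)) = f.1 i + q * (n + 1) := by
  induction i using Fin.lastCases with
  | cast j => exact f.extend_castSucc_add_mul j q
  | last =>
    have h := f.extend_castSucc_add_mul 0 (q + 1)
    simp only [Fin.castSucc_zero, f.2.1, Fin.val_zero, Nat.cast_zero, zero_add] at h
    rw [f.2.2, Fin.val_last, Nat.cast_succ, ← one_add_mul, add_comm 1 q, h]
    push_cast
    ring

lemma monotone_extend (f : TwoPtDelta.Hom m n) : Monotone f.extend := by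
  refine monotone_int_of_le_succ fun x => ?_
  obtain ⟨j, q, rfl⟩ := Int.exists_eq_fin_add_mul m x
  have h := f.extend_add_mul j.succ q
  rw [Fin.val_succ, Nat.cast_succ] at h
  rw [f.extend_castSucc_add_mul, add_right_comm, h]
  gcongr
  exact_mod_cast f.1.monotone (Fin.castSucc_le_succ j)

def toBasedCyclic (f : TwoPtDelta.Hom m n) : BasedCyclic.Hom m n :=
  ⟨⟨f.extend, f.monotone_extend⟩, by simpa [f.2.1] using f.extend_castSucc_add_mul 0 0, by
    intro x
    obtain ⟨j, q, rfl⟩ := Int.exists_eq_fin_add_mul m x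
    show f.extend _ = f.extend _ + _
    rw [add_assoc, ← add_one_mul, f.extend_castSucc_add_mul, f.extend_castSucc_add_mul]
    ring⟩

@[simp]
lemma toBasedCyclic_apply_add_mul (f : TwoPtDelta.Hom m n) (i : Fin (m + 2)) (q : ℤ) :
    f.toBasedCyclic.1 (i + q * (m + 1)) = f.1 i + q * (n + 1) :=
  f.extend_add_mul i q

lemma toBasedCyclic_toTwoPtDelta (f : TwoPtDelta.Hom m n) : f.toBasedCyclic.toTwoPtDelta = f := by
  ext i
  simpa using f.toBasedCyclic_apply_add_mul i 0

end TwoPtDelta.Hom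

lemma BasedCyclic.Hom.toTwoPtDelta_toBasedCyclic {m n : ℕ} (F : BasedCyclic.Hom m n) :
    F.toTwoPtDelta.toBasedCyclic = F := by
  ext x
  obtain ⟨j, q, rfl⟩ := Int.exists_eq_fin_add_mul m x
  rw [← Fin.val_castSucc j, TwoPtDelta.Hom.toBasedCyclic_apply_add_mul, coe_toTwoPtDelta_apply,
    F.map_add_mul]

noncomputable def basedCyclicToTwoPtDelta : BasedCyclic ⥤ TwoPtDelta where
  obj m := m
  map F := BasedCyclic.Hom.toTwoPtDelta F
  map_id (m : ℕ) := by
    refine TwoPtDelta.Hom.ext fun i => ?_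
    rw [BasedCyclic.Hom.coe_toTwoPtDelta_apply]
    rfl
  map_comp {m n p : ℕ} F G := by
    refine TwoPtDelta.Hom.ext fun i => ?_
    change _ = ((G.toTwoPtDelta.1 (F.toTwoPtDelta.1 i) : ℕ) : ℤ)
    rw [BasedCyclic.Hom.coe_toTwoPtDelta_apply, BasedCyclic.Hom.coe_toTwoPtDelta_apply,
      BasedCyclic.Hom.coe_toTwoPtDelta_apply]
    rfl

noncomputable def twoPtDeltaToBasedCyclic : TwoPtDelta ⥤ BasedCyclic where
  obj m := m
  map f := TwoPtDelta.Hom.toBasedCyclic f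
  map_id (m : ℕ) := by
    refine BasedCyclic.Hom.ext fun x => ?_
    obtain ⟨j, q, rfl⟩ := Int.exists_eq_fin_add_mul m x
    rw [← Fin.val_castSucc j, TwoPtDelta.Hom.toBasedCyclic_apply_add_mul]
    rfl
  map_comp {m n p : ℕ} f g := by
    refine BasedCyclic.Hom.ext fun x => ?_
    obtain ⟨j, q, rfl⟩ := Int.exists_eq_fin_add_mul m x
    change _ = g.toBasedCyclic.1 (f.toBasedCyclic.1 _)
    rw [← Fin.val_castSucc j, TwoPtDelta.Hom.toBasedCyclic_apply_add_mul,
      TwoPtDelta.Hom.toBasedCyclic_apply_add_mul, TwoPtDelta.Hom.toBasedCyclic_apply_add_mul]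
    rfl

/-- `^0ΔC` is isomorphic to `^{01}Δ` (both categories have objects indexed by `ℕ`, an object
with `m+1` elements corresponding to one with `m+2` elements; on morphisms, the basepoint fiber
is split into its parts after and before the basepoint, which are sent to the new minimal and
maximal elements respectively). -/
theorem basedCyclic_iso_twoPtDelta :
    ∃ (F : BasedCyclic ⥤ TwoPtDelta) (G : TwoPtDelta ⥤ BasedCyclic),
      F ⋙ G = 𝟭 BasedCyclic ∧ G ⋙ F = 𝟭 TwoPtDelta ∧
      ∀ m : BasedCyclic, F.obj m = m :=
  ⟨basedCyclicToTwoPtDelta, twoPtDeltaToBasedCyclic,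
    Functor.hext (fun _ => rfl) fun _ _ F => heq_of_eq F.toTwoPtDelta_toBasedCyclic,
    Functor.hext (fun _ => rfl) fun _ _ f => heq_of_eq f.toBasedCyclic_toTwoPtDelta,
    fun _ => rfl⟩
end
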